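/- Let λ₁, λ₂ > 0, T > 0, and let Π : ℕ × ℕ → ℝ be a bounded payoff function, and define the value function X(t, n₁, n₂) = Σ_{k₁=0}^∞ Σ_{k₂=0}^∞ Π(n₁+k₁, n₂+k₂) · P(k₁, λ₁(T−t)) · P(k₂, λ₂(T−t)) where P(k, Λ) = e^{−Λ} Λ^k / k!. If at some time t ∈ [0, T] and scores (n₁, n₂) the value is Delta-neutral, i.e. X(t, n₁+1, n₂) = X(t, n₁, n₂) and X(t, n₁, n₂+1) = X(t, n₁, n₂), then it is also Theta-neutral at that point, i.e. the time derivative ∂_t X(t, n₁, n₂) equals 0. -/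

import Mathlib

/-!
Differentiating the series termwise (for a bounded payoff the termwise derivatives are dominated
near `t` by a summable product sequence), with `d/dΛ P(k, Λ) = P(k - 1, Λ) - P(k, Λ)` and a shift
of the summation index, gives the backward Kolmogorov equation
`∂ₜ X(t, n₁, n₂) = λ₁ (X(t, n₁, n₂) - X(t, n₁ + 1, n₂)) + λ₂ (X(t, n₁, n₂) - X(t, n₁, n₂ + 1))`,
whose right-hand side vanishes for a Delta-neutral position.
-/

/-- The Poisson probability mass function `P(k, Λ) = e^{−Λ} Λ^k / k!`. -/
noncomputable def poissonP (Λ : ℝ) (k : ℕ) : ℝ :=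
  Real.exp (-Λ) * Λ ^ k / (Nat.factorial k)

/-- The value of a European bet with payoff `pay` at time `t` with current scores
`(n₁, n₂)`, in the Poisson model with intensities `lam₁, lam₂` and terminal time `T`. -/
noncomputable def betValue (lam₁ lam₂ T : ℝ) (pay : ℕ × ℕ → ℝ)
    (t : ℝ) (n₁ n₂ : ℕ) : ℝ :=
  ∑' k₁ : ℕ, ∑' k₂ : ℕ,
    pay (n₁ + k₁, n₂ + k₂) * poissonP (lam₁ * (T - t)) k₁ * poissonP (lam₂ * (T - t)) k₂

open Metric

noncomputable def poissonPrev (Λ : ℝ) : ℕ → ℝ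
  | 0 => 0
  | k + 1 => poissonP Λ k

noncomputable def poissonSum (a : ℕ × ℕ → ℝ) (Λ₁ Λ₂ : ℝ) : ℝ :=
  ∑' p : ℕ × ℕ, a p * poissonP Λ₁ p.1 * poissonP Λ₂ p.2

lemma hasDerivAt_poissonP (Λ : ℝ) (k : ℕ) :
    HasDerivAt (fun x => poissonP x k) (poissonPrev Λ k - poissonP Λ k) Λ := by
  have h : HasDerivAt (fun x => Real.exp (-x) * (x ^ k / k.factorial))
      (Real.exp (-Λ) * -1 * (Λ ^ k / k.factorial) +
        Real.exp (-Λ) * (k * Λ ^ (k - 1) / k.factorial)) Λ :=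
    (hasDerivAt_neg Λ).exp.mul ((hasDerivAt_pow k Λ).div_const _)
  convert h using 1
  · exact funext fun x => mul_div_assoc _ _ _
  rcases k with _ | k
  · simp [poissonPrev, poissonP]
  · simp only [poissonPrev, poissonP, Nat.factorial_succ, Nat.add_sub_cancel]
    push_cast
    field_simp
    ring

lemma hasDerivAt_poissonP_mul_sub (lam T s : ℝ) (k : ℕ) :
    HasDerivAt (fun x => poissonP (lam * (T - x)) k)
      (lam * (poissonP (lam * (T - s)) k - poissonPrev (lam * (T - s)) k)) s := by
  have := (hasDerivAt_poissonP (lam * (T - s)) k).comp s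
    (((hasDerivAt_id s).const_sub T).const_mul lam)
  exact this.congr_deriv (by ring)

-- `|P(k, -M)| = e^M M^k / k!`, the usual majorant.
lemma abs_poissonP_le {Λ M : ℝ} (hΛ : |Λ| ≤ M) (k : ℕ) :
    |poissonP Λ k| ≤ |poissonP (-M) k| := by
  simp only [poissonP, abs_div, abs_mul, abs_pow, abs_neg, neg_neg, Real.abs_exp,
    abs_of_nonneg ((abs_nonneg Λ).trans hΛ)]
  gcongr
  exact (neg_le_abs Λ).trans hΛ

lemma abs_poissonPrev_le {Λ M : ℝ} (hΛ : |Λ| ≤ M) :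
    ∀ k, |poissonPrev Λ k| ≤ |poissonPrev (-M) k|
  | 0 => le_rfl
  | k + 1 => abs_poissonP_le hΛ k

lemma summable_abs_poissonP (Λ : ℝ) : Summable fun k => |poissonP Λ k| := by
  simpa [poissonP, abs_div, abs_mul, abs_pow, mul_div_assoc] using
    (Real.summable_pow_div_factorial |Λ|).mul_left (Real.exp (-Λ))

lemma summable_abs_poissonPrev (Λ : ℝ) : Summable fun k => |poissonPrev Λ k| :=
  (summable_nat_add_iff 1).mp (summable_abs_poissonP Λ)

section IndexShift

variable {M : Type*} [AddCommMonoid M] [TopologicalSpace M]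

lemma tsum_prod_succ_fst {f : ℕ × ℕ → M} (hf : ∀ j, f (0, j) = 0) :
    ∑' p : ℕ × ℕ, f (p.1 + 1, p.2) = ∑' p, f p := by
  refine Function.Injective.tsum_eq (fun p q h => ?_) fun x hx => ?_
  · simp only [Prod.mk.injEq, Nat.add_right_cancel_iff] at h
    exact Prod.ext h.1 h.2
  · obtain ⟨_ | i, j⟩ := x
    · exact absurd (hf j) hx
    · exact ⟨(i, j), rfl⟩

lemma tsum_prod_succ_snd {f : ℕ × ℕ → M} (hf : ∀ i, f (i, 0) = 0) :
    ∑' p : ℕ × ℕ, f (p.1, p.2 + 1) = ∑' p, f p := by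
  rw [← (Equiv.prodComm ℕ ℕ).tsum_eq, ← (Equiv.prodComm ℕ ℕ).tsum_eq f]
  exact tsum_prod_succ_fst (f := fun p => f p.swap) hf

end IndexShift

section ProductSeries

variable {a : ℕ × ℕ → ℝ} {C : ℝ}

lemma summable_mul_prod (ha : ∀ p, |a p| ≤ C) {u v ρ σ : ℕ → ℝ}
    (hρ : Summable ρ) (hσ : Summable σ) (hu : ∀ k, |u k| ≤ ρ k) (hv : ∀ k, |v k| ≤ σ k) :
    Summable fun p : ℕ × ℕ => a p * u p.1 * v p.2 := by
  have hρ0 : 0 ≤ ρ := fun k => (abs_nonneg _).trans (hu k)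
  have hσ0 : 0 ≤ σ := fun k => (abs_nonneg _).trans (hv k)
  refine .of_norm_bounded ((hρ.mul_of_nonneg hσ hρ0 hσ0).mul_left C) fun p => ?_
  rw [Real.norm_eq_abs, abs_mul, abs_mul, mul_assoc]
  exact mul_le_mul (ha p) (mul_le_mul (hu _) (hv _) (abs_nonneg _) (hρ0 _))
    (by positivity) ((abs_nonneg _).trans (ha p))

lemma hasDerivAt_tsum_mul_prod (ha : ∀ p, |a p| ≤ C)
    {u v u' v' : ℕ → ℝ → ℝ} {ρ : ℕ → ℝ} (hρ : Summable ρ)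
    {U : Set ℝ} (hU : IsOpen U) (hU' : IsPreconnected U) {t : ℝ} (ht : t ∈ U)
    (hu : ∀ k, ∀ s ∈ U, HasDerivAt (u k) (u' k s) s)
    (hv : ∀ k, ∀ s ∈ U, HasDerivAt (v k) (v' k s) s)
    (hub : ∀ k, ∀ s ∈ U, |u k s| ≤ ρ k) (hvb : ∀ k, ∀ s ∈ U, |v k s| ≤ ρ k)
    (hu'b : ∀ k, ∀ s ∈ U, |u' k s| ≤ ρ k) (hv'b : ∀ k, ∀ s ∈ U, |v' k s| ≤ ρ k) :
    HasDerivAt (fun s => ∑' p : ℕ × ℕ, a p * u p.1 s * v p.2 s)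
      (∑' p : ℕ × ℕ, a p * (u' p.1 t * v p.2 t + u p.1 t * v' p.2 t)) t := by
  have hρ0 : 0 ≤ ρ := fun k => (abs_nonneg _).trans (hub k t ht)
  have hC : 0 ≤ C := (abs_nonneg _).trans (ha 0)
  have hbound : ∀ p : ℕ × ℕ, ∀ s ∈ U,
      ‖a p * (u' p.1 s * v p.2 s + u p.1 s * v' p.2 s)‖ ≤ 2 * C * (ρ p.1 * ρ p.2) := by
    intro p s hs
    have h₁ : |u' p.1 s * v p.2 s| ≤ ρ p.1 * ρ p.2 := by
      rw [abs_mul]; exact mul_le_mul (hu'b _ s hs) (hvb _ s hs) (abs_nonneg _) (hρ0 _)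
    have h₂ : |u p.1 s * v' p.2 s| ≤ ρ p.1 * ρ p.2 := by
      rw [abs_mul]; exact mul_le_mul (hub _ s hs) (hv'b _ s hs) (abs_nonneg _) (hρ0 _)
    rw [Real.norm_eq_abs, abs_mul]
    calc |a p| * |u' p.1 s * v p.2 s + u p.1 s * v' p.2 s|
        ≤ C * (ρ p.1 * ρ p.2 + ρ p.1 * ρ p.2) :=
          mul_le_mul (ha p) ((abs_add_le _ _).trans (add_le_add h₁ h₂)) (abs_nonneg _) hC
      _ = 2 * C * (ρ p.1 * ρ p.2) := by ring
  have hw : Summable fun p : ℕ × ℕ => 2 * C * (ρ p.1 * ρ p.2) :=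
    (hρ.mul_of_nonneg hρ hρ0 hρ0).mul_left _
  have hs : Summable fun p : ℕ × ℕ => a p * u p.1 t * v p.2 t :=
    summable_mul_prod (u := fun k => u k t) (v := fun k => v k t) ha hρ hρ
      (fun k => hub k t ht) (fun k => hvb k t ht)
  have hg : ∀ (p : ℕ × ℕ), ∀ s ∈ U, HasDerivAt (fun s => a p * u p.1 s * v p.2 s)
      (a p * (u' p.1 s * v p.2 s + u p.1 s * v' p.2 s)) s := fun p s hs =>
    (((hu p.1 s hs).const_mul (a p)).mul (hv p.2 s hs)).congr_deriv (by ring)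
  exact hasDerivAt_tsum_of_isPreconnected hw hU hU' hg hbound ht hs ht

end ProductSeries

lemma summable_mul_poissonP_mul_poissonP {a : ℕ × ℕ → ℝ} {C : ℝ} (ha : ∀ p, |a p| ≤ C)
    (Λ₁ Λ₂ : ℝ) : Summable fun p : ℕ × ℕ => a p * poissonP Λ₁ p.1 * poissonP Λ₂ p.2 :=
  summable_mul_prod ha (summable_abs_poissonP Λ₁) (summable_abs_poissonP Λ₂)
    (fun _ => le_rfl) (fun _ => le_rfl)

lemma poissonSum_shift_fst (a : ℕ × ℕ → ℝ) (Λ₁ Λ₂ : ℝ) :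
    poissonSum (fun p => a (p.1 + 1, p.2)) Λ₁ Λ₂ =
      ∑' p : ℕ × ℕ, a p * poissonPrev Λ₁ p.1 * poissonP Λ₂ p.2 :=
  tsum_prod_succ_fst (f := fun p => a p * poissonPrev Λ₁ p.1 * poissonP Λ₂ p.2)
    fun j => by simp [poissonPrev]

lemma poissonSum_shift_snd (a : ℕ × ℕ → ℝ) (Λ₁ Λ₂ : ℝ) :
    poissonSum (fun p => a (p.1, p.2 + 1)) Λ₁ Λ₂ =
      ∑' p : ℕ × ℕ, a p * poissonP Λ₁ p.1 * poissonPrev Λ₂ p.2 :=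
  tsum_prod_succ_snd (f := fun p => a p * poissonP Λ₁ p.1 * poissonPrev Λ₂ p.2)
    fun i => by simp [poissonPrev]

lemma tsum_mul_poissonP_derivs_eq {a : ℕ × ℕ → ℝ} {C : ℝ} (ha : ∀ p, |a p| ≤ C)
    (lam₁ lam₂ Λ₁ Λ₂ : ℝ) :
    ∑' p : ℕ × ℕ, a p * (lam₁ * (poissonP Λ₁ p.1 - poissonPrev Λ₁ p.1) * poissonP Λ₂ p.2 +
        poissonP Λ₁ p.1 * (lam₂ * (poissonP Λ₂ p.2 - poissonPrev Λ₂ p.2))) =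
      lam₁ * (poissonSum a Λ₁ Λ₂ - poissonSum (fun p => a (p.1 + 1, p.2)) Λ₁ Λ₂) +
        lam₂ * (poissonSum a Λ₁ Λ₂ - poissonSum (fun p => a (p.1, p.2 + 1)) Λ₁ Λ₂) := by
  have hPP := summable_mul_poissonP_mul_poissonP ha Λ₁ Λ₂
  have hQP : Summable fun p : ℕ × ℕ => a p * poissonPrev Λ₁ p.1 * poissonP Λ₂ p.2 :=
    summable_mul_prod ha (summable_abs_poissonPrev Λ₁) (summable_abs_poissonP Λ₂)
      (fun _ => le_rfl) (fun _ => le_rfl)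
  have hPQ : Summable fun p : ℕ × ℕ => a p * poissonP Λ₁ p.1 * poissonPrev Λ₂ p.2 :=
    summable_mul_prod ha (summable_abs_poissonP Λ₁) (summable_abs_poissonPrev Λ₂)
      (fun _ => le_rfl) (fun _ => le_rfl)
  rw [poissonSum_shift_fst, poissonSum_shift_snd, poissonSum, ← hPP.tsum_sub hQP,
    ← hPP.tsum_sub hPQ, ← tsum_mul_left, ← tsum_mul_left,
    ← ((hPP.sub hQP).mul_left lam₁).tsum_add ((hPP.sub hPQ).mul_left lam₂)]
  exact tsum_congr fun p => by ring

lemma abs_mul_sub_le_of_mem_ball {lam L T t s : ℝ} (hlam : |lam| ≤ L) (hs : s ∈ ball t 1) :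
    |lam * (T - s)| ≤ L * (|T - t| + 1) := by
  rw [mem_ball, Real.dist_eq, abs_sub_comm] at hs
  have hTs : |T - s| ≤ |T - t| + 1 :=
    calc |T - s| = |(T - t) + (t - s)| := by ring_nf
      _ ≤ |T - t| + |t - s| := abs_add_le _ _
      _ ≤ |T - t| + 1 := by linarith
  rw [abs_mul]
  exact mul_le_mul hlam hTs (abs_nonneg _) ((abs_nonneg lam).trans hlam)

theorem hasDerivAt_poissonSum {a : ℕ × ℕ → ℝ} {C : ℝ} (ha : ∀ p, |a p| ≤ C)
    (lam₁ lam₂ T t : ℝ) :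
    HasDerivAt (fun s => poissonSum a (lam₁ * (T - s)) (lam₂ * (T - s)))
      (lam₁ * (poissonSum a (lam₁ * (T - t)) (lam₂ * (T - t)) -
          poissonSum (fun p => a (p.1 + 1, p.2)) (lam₁ * (T - t)) (lam₂ * (T - t))) +
        lam₂ * (poissonSum a (lam₁ * (T - t)) (lam₂ * (T - t)) -
          poissonSum (fun p => a (p.1, p.2 + 1)) (lam₁ * (T - t)) (lam₂ * (T - t)))) t := by
  set L := |lam₁| + |lam₂|
  set M := L * (|T - t| + 1)
  set ρ : ℕ → ℝ := fun k => (1 + L) * (|poissonP (-M) k| + |poissonPrev (-M) k|)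
  have hρ : Summable ρ :=
    ((summable_abs_poissonP _).add (summable_abs_poissonPrev _)).mul_left (1 + L)
  have hL : 0 ≤ L := by positivity
  have hval : ∀ {lam : ℝ}, |lam| ≤ L → ∀ k, ∀ s ∈ ball t 1,
      |poissonP (lam * (T - s)) k| ≤ ρ k := by
    intro lam hlam k s hs
    have hP := abs_poissonP_le (abs_mul_sub_le_of_mem_ball (T := T) hlam hs) k
    calc |poissonP (lam * (T - s)) k|
        ≤ 1 * (|poissonP (-M) k| + |poissonPrev (-M) k|) := by
          linarith [abs_nonneg (poissonPrev (-M) k)]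
      _ ≤ (1 + L) * (|poissonP (-M) k| + |poissonPrev (-M) k|) := by gcongr; linarith
  have hder : ∀ {lam : ℝ}, |lam| ≤ L → ∀ k, ∀ s ∈ ball t 1,
      |lam * (poissonP (lam * (T - s)) k - poissonPrev (lam * (T - s)) k)| ≤ ρ k := by
    intro lam hlam k s hs
    have hΛ := abs_mul_sub_le_of_mem_ball (T := T) hlam hs
    calc |lam * (poissonP (lam * (T - s)) k - poissonPrev (lam * (T - s)) k)|
        ≤ |lam| * (|poissonP (-M) k| + |poissonPrev (-M) k|) := by
          rw [abs_mul]
          gcongr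
          exact (abs_sub _ _).trans
            (add_le_add (abs_poissonP_le hΛ k) (abs_poissonPrev_le hΛ k))
      _ ≤ (1 + L) * (|poissonP (-M) k| + |poissonPrev (-M) k|) := by gcongr; linarith
  have h₁ : |lam₁| ≤ L := le_add_of_nonneg_right (abs_nonneg _)
  have h₂ : |lam₂| ≤ L := le_add_of_nonneg_left (abs_nonneg _)
  refine (hasDerivAt_tsum_mul_prod ha hρ isOpen_ball (convex_ball t 1).isPreconnected
    (mem_ball_self one_pos) (fun k s _ => hasDerivAt_poissonP_mul_sub lam₁ T s k)
    (fun k s _ => hasDerivAt_poissonP_mul_sub lam₂ T s k)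
    (hval h₁) (hval h₂) (hder h₁) (hder h₂)).congr_deriv ?_
  exact tsum_mul_poissonP_derivs_eq ha _ _ _ _

lemma betValue_eq_poissonSum {pay : ℕ × ℕ → ℝ} {C : ℝ} (hpay : ∀ p, |pay p| ≤ C)
    (lam₁ lam₂ T s : ℝ) (n₁ n₂ : ℕ) :
    betValue lam₁ lam₂ T pay s n₁ n₂ =
      poissonSum (fun p => pay (n₁ + p.1, n₂ + p.2)) (lam₁ * (T - s)) (lam₂ * (T - s)) := by
  have h := summable_mul_poissonP_mul_poissonP (a := fun p => pay (n₁ + p.1, n₂ + p.2))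
    (fun p => hpay _) (lam₁ * (T - s)) (lam₂ * (T - s))
  exact (h.tsum_prod' h.prod_factor).symm

theorem hasDerivAt_betValue {pay : ℕ × ℕ → ℝ} {C : ℝ} (hpay : ∀ p, |pay p| ≤ C)
    (lam₁ lam₂ T t : ℝ) (n₁ n₂ : ℕ) :
    HasDerivAt (fun s => betValue lam₁ lam₂ T pay s n₁ n₂)
      (lam₁ * (betValue lam₁ lam₂ T pay t n₁ n₂ - betValue lam₁ lam₂ T pay t (n₁ + 1) n₂) +
        lam₂ * (betValue lam₁ lam₂ T pay t n₁ n₂ - betValue lam₁ lam₂ T pay t n₁ (n₂ + 1))) t := by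
  simp only [betValue_eq_poissonSum hpay]
  convert hasDerivAt_poissonSum (a := fun p => pay (n₁ + p.1, n₂ + p.2)) (fun p => hpay _)
    lam₁ lam₂ T t using 5 <;> ext p <;> ring_nf

theorem deltaNeutral_implies_thetaNeutral_general
    (lam₁ lam₂ T : ℝ)
    (pay : ℕ × ℕ → ℝ) (hpay : ∃ C : ℝ, ∀ p : ℕ × ℕ, |pay p| ≤ C)
    (t : ℝ) (n₁ n₂ : ℕ)
    (hdelta₁ : betValue lam₁ lam₂ T pay t (n₁ + 1) n₂ = betValue lam₁ lam₂ T pay t n₁ n₂)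
    (hdelta₂ : betValue lam₁ lam₂ T pay t n₁ (n₂ + 1) = betValue lam₁ lam₂ T pay t n₁ n₂) :
    deriv (fun s : ℝ => betValue lam₁ lam₂ T pay s n₁ n₂) t = 0 := by
  obtain ⟨C, hC⟩ := hpay
  rw [(hasDerivAt_betValue hC lam₁ lam₂ T t n₁ n₂).deriv, hdelta₁, hdelta₂]
  ring

/-- A Delta-neutral European bet value (both forward differences vanish) is also
Theta-neutral (its time derivative vanishes). -/
theorem deltaNeutral_implies_thetaNeutral
    (lam₁ lam₂ T : ℝ) (hlam₁ : 0 < lam₁) (hlam₂ : 0 < lam₂) (hT : 0 < T)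
    (pay : ℕ × ℕ → ℝ) (hpay : ∃ C : ℝ, ∀ p : ℕ × ℕ, |pay p| ≤ C)
    (t : ℝ) (ht : t ∈ Set.Icc (0 : ℝ) T) (n₁ n₂ : ℕ)
    (hdelta₁ : betValue lam₁ lam₂ T pay t (n₁ + 1) n₂ = betValue lam₁ lam₂ T pay t n₁ n₂)
    (hdelta₂ : betValue lam₁ lam₂ T pay t n₁ (n₂ + 1) = betValue lam₁ lam₂ T pay t n₁ n₂) :
    deriv (fun s : ℝ => betValue lam₁ lam₂ T pay s n₁ n₂) t = 0 :=
  deltaNeutral_implies_thetaNeutral_general lam₁ lam₂ T pay hpay t n₁ n₂ hdelta₁ hdelta₂
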